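/- arXiv:2412.13070 — 2 statements merged into one kernel-verified Lean document; each statement's English description precedes it below -/
import Mathlib

section
/- The scalar iteration σ_{k+1} = (1/2)σ_k(3 - σ_k²) converges to 1 for any initial σ₀ ∈ (0, √3), and the fixed points of the map in [0,∞) are exactly 0 and 1. -/
/-! The map `g` sends `(0, √3)` into `(0, 1]`, and on `(0, 1]` it satisfies `s ≤ g s ≤ 1`.
So from the first step on the orbit is increasing and bounded by `1`; its limit is a positive
fixed point of `g`, and the only one is `1`, since `g s - s = -s (s - 1) (s + 1) / 2`. -/

open Filter Set Function Topology

noncomputable def bjorckMap (s : ℝ) : ℝ := 1 / 2 * s * (3 - s ^ 2)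

theorem continuous_bjorckMap : Continuous bjorckMap := by
  unfold bjorckMap
  fun_prop

theorem bjorckMap_eq_self_iff (s : ℝ) : bjorckMap s = s ↔ s = 0 ∨ s = 1 ∨ s = -1 := by
  have hfactor : bjorckMap s - s = -(1 / 2) * (s * ((s - 1) * (s + 1))) := by
    unfold bjorckMap; ring
  rw [← sub_eq_zero, hfactor]
  simp only [mul_eq_zero, sub_eq_zero, add_eq_zero_iff_eq_neg]
  norm_num

theorem bjorckMap_eq_self_iff_of_nonneg {s : ℝ} (hs : 0 ≤ s) :
    bjorckMap s = s ↔ s = 0 ∨ s = 1 := by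
  rw [bjorckMap_eq_self_iff]
  constructor
  · rintro (h | h | h)
    exacts [Or.inl h, Or.inr h, by linarith]
  · rintro (h | h)
    exacts [Or.inl h, Or.inr (Or.inl h)]

-- `1 - bjorckMap s = (s - 1)² (s + 2) / 2`
theorem bjorckMap_le_one {s : ℝ} (hs : -2 ≤ s) : bjorckMap s ≤ 1 := by
  unfold bjorckMap
  nlinarith [mul_nonneg (sq_nonneg (s - 1)) (show 0 ≤ s + 2 by linarith)]

theorem le_bjorckMap {s : ℝ} (h₀ : 0 ≤ s) (h₁ : s ≤ 1) : s ≤ bjorckMap s := by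
  unfold bjorckMap
  nlinarith [mul_nonneg h₀ (show 0 ≤ 1 - s ^ 2 by nlinarith)]

theorem bjorckMap_mem_Ioc {s : ℝ} (hs : s ∈ Ioo 0 (√3)) : bjorckMap s ∈ Ioc 0 1 := by
  obtain ⟨h₀, h₃⟩ := hs
  have hsq : s ^ 2 < 3 := by
    nlinarith [Real.sq_sqrt (show (0 : ℝ) ≤ 3 by norm_num)]
  refine ⟨?_, bjorckMap_le_one (by linarith)⟩
  unfold bjorckMap
  nlinarith [mul_pos h₀ (sub_pos.2 hsq)]

theorem Ioc_zero_one_subset_Ioo_zero_sqrt_three : Ioc (0 : ℝ) 1 ⊆ Ioo 0 (√3) :=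
  fun _ ⟨h₀, h₁⟩ => ⟨h₀, h₁.trans_lt (by
    rw [Real.lt_sqrt zero_le_one]; norm_num)⟩

theorem mapsTo_bjorckMap_Ioc : MapsTo bjorckMap (Ioc 0 1) (Ioc 0 1) :=
  fun _ hs => bjorckMap_mem_Ioc (Ioc_zero_one_subset_Ioo_zero_sqrt_three hs)

theorem monotone_iterate_bjorckMap {x : ℝ} (hx : x ∈ Ioc 0 1) :
    Monotone fun n => bjorckMap^[n] x := by
  refine monotone_nat_of_le_succ fun n => ?_
  obtain ⟨h₀, h₁⟩ := mapsTo_bjorckMap_Ioc.iterate n hx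
  rw [iterate_succ_apply']
  exact le_bjorckMap h₀.le h₁

theorem tendsto_iterate_bjorckMap_of_mem_Ioc {x : ℝ} (hx : x ∈ Ioc 0 1) :
    Tendsto (fun n => bjorckMap^[n] x) atTop (𝓝 1) := by
  have hbdd : BddAbove (range fun n => bjorckMap^[n] x) :=
    ⟨1, forall_mem_range.2 fun n => (mapsTo_bjorckMap_Ioc.iterate n hx).2⟩
  have hlim := tendsto_atTop_ciSup (monotone_iterate_bjorckMap hx) hbdd
  set L := ⨆ n, bjorckMap^[n] x
  have hL_pos : 0 < L := hx.1.trans_le (le_ciSup hbdd 0)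
  have hL_fixed : bjorckMap L = L :=
    isFixedPt_of_tendsto_iterate hlim continuous_bjorckMap.continuousAt
  obtain hL | hL := (bjorckMap_eq_self_iff_of_nonneg hL_pos.le).1 hL_fixed
  · exact absurd hL hL_pos.ne'
  · rwa [hL] at hlim

theorem tendsto_iterate_bjorckMap {x : ℝ} (hx : x ∈ Ioo 0 (√3)) :
    Tendsto (fun n => bjorckMap^[n] x) atTop (𝓝 1) := by
  refine (tendsto_add_atTop_iff_nat 1).1 ?_
  simp only [iterate_succ_apply]
  exact tendsto_iterate_bjorckMap_of_mem_Ioc (bjorckMap_mem_Ioc hx)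

theorem eq_iterate_of_succ_eq {α : Type*} {f : α → α} {u : ℕ → α}
    (hu : ∀ k, u (k + 1) = f (u k)) (n : ℕ) : u n = f^[n] (u 0) := by
  induction n with
  | zero => rfl
  | succ n ih => rw [hu, ih, iterate_succ_apply']

/-- The scalar iteration `σ_{k+1} = (1/2)σ_k(3 - σ_k²)` converges to `1` for any
initial value `σ₀ ∈ (0, √3)`, and the fixed points of the map in `[0, ∞)` are
exactly `0` and `1`. -/
theorem stmt5 :
    (∀ σ : ℕ → ℝ, 0 < σ 0 → σ 0 < Real.sqrt 3 →
      (∀ k, σ (k + 1) = 1 / 2 * σ k * (3 - σ k ^ 2)) →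
      Tendsto σ atTop (nhds 1)) ∧
    (∀ s : ℝ, 0 ≤ s → (1 / 2 * s * (3 - s ^ 2) = s ↔ s = 0 ∨ s = 1)) := by
  refine ⟨fun σ h₀ h₃ hrec => ?_, fun s hs => bjorckMap_eq_self_iff_of_nonneg hs⟩
  have horbit : σ = fun n => bjorckMap^[n] (σ 0) := funext (eq_iterate_of_succ_eq hrec)
  rw [horbit]
  exact tendsto_iterate_bjorckMap ⟨h₀, h₃⟩
end

section
/- For every γ > 0 and τ > 0, the function φ(x) = x|x|^γ/(τ^γ + |x|^γ) is continuous, odd, satisfies |φ(x)| ≤ |x|, and is monotonically nondecreasing when γ ≤ 2... specifically, for γ ∈ (0, 2], φ is nondecreasing on ℝ. -/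
/-!
Writing `φ x = x * s (|x| ^ γ)` with the saturation `s t = t / (τ ^ γ + t) ∈ [0, 1)`, which is
nondecreasing in `t ≥ 0`, all four properties are immediate: `|φ x| ≤ |x|` because `s ≤ 1`, and on
`[0, ∞)` the function `φ` is a product of nonnegative nondecreasing factors, so being odd it is
nondecreasing on all of `ℝ`.
-/

open Set

lemma div_add_self_le_one {c t : ℝ} (hc : 0 ≤ c) (ht : 0 ≤ t) : t / (c + t) ≤ 1 :=
  div_le_one_of_le₀ (le_add_of_nonneg_left hc) (add_nonneg hc ht)

lemma monotoneOn_div_add_self {c : ℝ} (hc : 0 < c) :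
    MonotoneOn (fun t : ℝ => t / (c + t)) (Ici 0) := by
  intro t ht u hu htu
  rw [mem_Ici] at ht hu
  simp only
  rw [div_le_div_iff₀ (by positivity) (by positivity)]
  nlinarith

noncomputable def shrink (τ γ x : ℝ) : ℝ := x * |x| ^ γ / (τ ^ γ + |x| ^ γ)

section

variable {τ γ : ℝ}

lemma shrink_eq_mul_div_add_self (x : ℝ) :
    shrink τ γ x = x * (|x| ^ γ / (τ ^ γ + |x| ^ γ)) :=
  mul_div_assoc _ _ _

lemma shrink_neg (x : ℝ) : shrink τ γ (-x) = -shrink τ γ x := by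
  simp only [shrink, abs_neg, neg_mul, neg_div]

lemma continuous_shrink (hτ : 0 < τ) (hγ : 0 ≤ γ) : Continuous (shrink τ γ) := by
  have hpow : Continuous fun x : ℝ => |x| ^ γ := continuous_abs.rpow_const fun _ => Or.inr hγ
  refine (continuous_id.mul hpow).div (continuous_const.add hpow) fun x => ?_
  exact (add_pos_of_pos_of_nonneg (Real.rpow_pos_of_pos hτ γ) (by positivity)).ne'

lemma abs_shrink_le (hτ : 0 ≤ τ) (x : ℝ) : |shrink τ γ x| ≤ |x| := by
  have hτγ : 0 ≤ τ ^ γ := Real.rpow_nonneg hτ γ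
  have hs : 0 ≤ |x| ^ γ := by positivity
  rw [shrink_eq_mul_div_add_self, abs_mul, abs_of_nonneg (div_nonneg hs (add_nonneg hτγ hs))]
  exact mul_le_of_le_one_right (abs_nonneg x) (div_add_self_le_one hτγ hs)

lemma monotoneOn_shrink_Ici (hτ : 0 < τ) (hγ : 0 ≤ γ) : MonotoneOn (shrink τ γ) (Ici 0) := by
  have hτγ : 0 < τ ^ γ := Real.rpow_pos_of_pos hτ γ
  have hpow : MonotoneOn (fun x : ℝ => x ^ γ) (Ici 0) :=
    Real.monotoneOn_rpow_Ici_of_exponent_nonneg hγ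
  have hfactor : MonotoneOn (fun x : ℝ => x ^ γ / (τ ^ γ + x ^ γ)) (Ici 0) :=
    (monotoneOn_div_add_self hτγ).comp hpow fun x hx => Real.rpow_nonneg hx γ
  have heq : EqOn (shrink τ γ) ((fun x => x) * fun x => x ^ γ / (τ ^ γ + x ^ γ)) (Ici 0) := by
    intro x hx
    simp only [shrink_eq_mul_div_add_self, abs_of_nonneg (mem_Ici.mp hx), Pi.mul_apply]
  refine (monotoneOn_id.mul hfactor (fun x hx => hx) fun x hx => ?_).congr heq.symm
  have := Real.rpow_nonneg (mem_Ici.mp hx) γ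
  positivity

lemma monotone_shrink (hτ : 0 < τ) (hγ : 0 ≤ γ) : Monotone (shrink τ γ) :=
  monotone_of_odd_of_monotoneOn_nonneg shrink_neg (monotoneOn_shrink_Ici hτ hγ)

end

theorem stmt9_general (τ γ : ℝ) (hτ : 0 < τ) (hγ : 0 < γ) :
    Continuous (fun x : ℝ => x * |x| ^ γ / (τ ^ γ + |x| ^ γ)) ∧
    (∀ x : ℝ, (-x) * |(-x)| ^ γ / (τ ^ γ + |(-x)| ^ γ)
      = -(x * |x| ^ γ / (τ ^ γ + |x| ^ γ))) ∧
    (∀ x : ℝ, |x * |x| ^ γ / (τ ^ γ + |x| ^ γ)| ≤ |x|) ∧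
    Monotone (fun x : ℝ => x * |x| ^ γ / (τ ^ γ + |x| ^ γ)) :=
  ⟨continuous_shrink hτ hγ.le, shrink_neg, abs_shrink_le hτ.le, monotone_shrink hτ hγ.le⟩

/-- For `τ > 0` and `γ ∈ (0, 2]`, the function `φ(x) = x|x|^γ/(τ^γ + |x|^γ)` is
continuous, odd, satisfies `|φ(x)| ≤ |x|`, and is nondecreasing on `ℝ`. -/
theorem stmt9 (τ γ : ℝ) (hτ : 0 < τ) (hγ : 0 < γ) (hγ2 : γ ≤ 2) :
    Continuous (fun x : ℝ => x * |x| ^ γ / (τ ^ γ + |x| ^ γ)) ∧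
    (∀ x : ℝ, (-x) * |(-x)| ^ γ / (τ ^ γ + |(-x)| ^ γ)
      = -(x * |x| ^ γ / (τ ^ γ + |x| ^ γ))) ∧
    (∀ x : ℝ, |x * |x| ^ γ / (τ ^ γ + |x| ^ γ)| ≤ |x|) ∧
    Monotone (fun x : ℝ => x * |x| ^ γ / (τ ^ γ + |x| ^ γ)) :=
  stmt9_general τ γ hτ hγ
end
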